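/- Define P1(v2,v3) = (1/3)·((v2/(v2+v3))·(v1/(v1+v2)) + (v3/(v2+v3))·(v1/(v1+v3))) + (2/3)·(v1/(v1+v2))·(v1/(v1+v3)) for fixed v1 > 0. Then the partial derivative of P1 with respect to v2 is nonpositive for all positive v1, v2, v3. -/

import Mathlib

/-!
The derivative of `P1` in `v2` is a rational function whose numerator is `-v1` times a polynomial
with positive coefficients and whose denominator is a product of positive factors.
-/

/-- `P1` as a function of `t = v2`. The first term is the draw (probability `1/3`) in which
players 2 and 3 meet first, the second the draws in which player 1 plays in the first round. -/
noncomputable def winProbFirst (v1 v3 t : ℝ) : ℝ :=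
  (1/3) * ((t / (t + v3)) * (v1 / (v1 + t)) + (v3 / (t + v3)) * (v1 / (v1 + v3)))
    + (2/3) * ((v1 / (v1 + t)) * (v1 / (v1 + v3)))

theorem hasDerivAt_winProbFirst {v1 v2 v3 : ℝ} (h12 : v1 + v2 ≠ 0) (h13 : v1 + v3 ≠ 0)
    (h23 : v2 + v3 ≠ 0) :
    HasDerivAt (winProbFirst v1 v3)
      (-(v1 * (v1 * v3 ^ 2 + 2 * v2 ^ 2 * v3 + 3 * v1 * v2 ^ 2 + 6 * v1 * v2 * v3))
        / (3 * (v2 + v3) ^ 2 * (v1 + v2) ^ 2 * (v1 + v3))) v2 := by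
  have hbeat23 : HasDerivAt (fun t => t / (t + v3)) (v3 / (v2 + v3) ^ 2) v2 :=
    ((hasDerivAt_id' v2).div ((hasDerivAt_id' v2).add_const v3) h23).congr_deriv (by ring)
  have hbeat12 : HasDerivAt (fun t => v1 / (v1 + t)) (-v1 / (v1 + v2) ^ 2) v2 :=
    ((hasDerivAt_const v2 v1).div ((hasDerivAt_id' v2).const_add v1) h12).congr_deriv (by ring)
  have hbeat32 : HasDerivAt (fun t => v3 / (t + v3)) (-v3 / (v2 + v3) ^ 2) v2 :=
    ((hasDerivAt_const v2 v3).div ((hasDerivAt_id' v2).add_const v3) h23).congr_deriv (by ring)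
  refine ((((hbeat23.mul hbeat12).add (hbeat32.mul_const _)).const_mul (1/3)).add
    ((hbeat12.mul_const _).const_mul (2/3))).congr_deriv ?_
  field_simp
  ring

theorem stmt_3 (v1 v2 v3 : ℝ) (h1 : 0 < v1) (h2 : 0 < v2) (h3 : 0 < v3) :
    deriv (fun t : ℝ =>
        (1/3) * ((t / (t + v3)) * (v1 / (v1 + t)) + (v3 / (t + v3)) * (v1 / (v1 + v3)))
        + (2/3) * ((v1 / (v1 + t)) * (v1 / (v1 + v3)))) v2 ≤ 0 := by
  change deriv (winProbFirst v1 v3) v2 ≤ 0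
  rw [(hasDerivAt_winProbFirst (by positivity) (by positivity) (by positivity)).deriv]
  exact div_nonpos_of_nonpos_of_nonneg (neg_nonpos.mpr (by positivity)) (by positivity)
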